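/- Theorem 3.1 (geometric multiplicity one). Let λ ∈ ℂ and suppose f : [0,2π] → ℂ is not identically zero, is absolutely continuous with derivative f′, satisfies f(0) = ρ f(2π), and satisfies i f′(x) + V(x) f(x) + f(2π) k(x) = λ f(x) for almost every x ∈ (0,2π). Then f(2π) ≠ 0; moreover, if f₁ and f₂ are two functions with all these properties, then there exists c ∈ ℂ with f₂ = c f₁ on [0,2π]. -/

import Mathlib

open MeasureTheory Real Complex

/-- `f : [0,2π] → ℂ` is absolutely continuous with derivative `f'`:
`f' ∈ L¹(0,2π)` and `f x = f 0 + ∫₀ˣ f'` for all `x ∈ [0,2π]`. -/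
def IsACWithDeriv (f f' : ℝ → ℂ) : Prop :=
  MeasureTheory.IntegrableOn f' (Set.Ioc 0 (2 * Real.pi)) ∧
    ∀ x ∈ Set.Icc (0:ℝ) (2 * Real.pi), f x = f 0 + ∫ t in (0:ℝ)..x, f' t

/-- `f` (with derivative `f'`) is an eigenfunction of `A_{ρ,k}` for the eigenvalue `λ`. -/
def IsEigenfun (V k : ℝ → ℂ) (ρ lam : ℂ) (f f' : ℝ → ℂ) : Prop :=
  IsACWithDeriv f f' ∧
    (∃ x ∈ Set.Icc (0:ℝ) (2 * Real.pi), f x ≠ 0) ∧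
    f 0 = ρ * f (2 * Real.pi) ∧
    ∀ᵐ x ∂(MeasureTheory.volume.restrict (Set.Ioo 0 (2 * Real.pi))),
      Complex.I * f' x + V x * f x + f (2 * Real.pi) * k x = lam * f x

/-!
If `f` solves the eigenvalue problem and `f(2π) = 0`, then `f(0) = 0` and `i f' = (λ - V) f`
a.e., so `‖f'‖ ≤ M ‖f‖` a.e. with `M = |λ| + ‖V‖_∞`. Iterating `f x = ∫₀ˣ f'` gives
`‖f x‖ ≤ C (M x)ⁿ / n!` for every `n`, hence `f = 0` on `[0,2π]`. So `f ↦ f(2π)` is injective on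
the (linear) space of solutions: eigenfunctions have `f(2π) ≠ 0`, and `f₂ - (f₂(2π)/f₁(2π)) f₁`
vanishes.
-/

open Set intervalIntegral

section Gronwall

variable {E : Type*} [NormedAddCommGroup E] [NormedSpace ℝ E] {g g' : ℝ → E} {a b M : ℝ}

theorem integral_mul_mul_pow_sub_div_factorial (C M a x : ℝ) (n : ℕ) :
    ∫ t in a..x, M * (C * (M * (t - a)) ^ n / n.factorial) =
      C * (M * (x - a)) ^ (n + 1) / (n + 1).factorial := by
  have hpow : ∫ t in a..x, (t - a) ^ n = (x - a) ^ (n + 1) / (n + 1) := by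
    rw [integral_comp_sub_right (fun t => t ^ n), integral_pow, sub_self,
      zero_pow n.succ_ne_zero, sub_zero]
  simp_rw [mul_pow, Nat.factorial_succ, Nat.cast_mul, Nat.cast_succ]
  have hconst : ∀ t : ℝ, M * (C * (M ^ n * (t - a) ^ n) / n.factorial) =
      M * C * M ^ n / n.factorial * (t - a) ^ n := fun t => by ring
  simp_rw [hconst, intervalIntegral.integral_const_mul, hpow]
  field_simp
  ring

theorem norm_le_mul_pow_div_factorial_of_eq_integral (hM : 0 ≤ M)
    (hg' : IntegrableOn g' (Ioc a b)) (hg : ∀ x ∈ Icc a b, g x = ∫ t in a..x, g' t)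
    (hbound : ∀ᵐ t ∂volume.restrict (Ioo a b), ‖g' t‖ ≤ M * ‖g t‖) (n : ℕ) :
    ∀ x ∈ Icc a b, ‖g x‖ ≤ (∫ t in a..b, ‖g' t‖) * (M * (x - a)) ^ n / n.factorial := by
  have hint : ∀ x ∈ Icc a b, IntervalIntegrable g' volume a x := fun x hx =>
    (intervalIntegrable_iff_integrableOn_Ioc_of_le hx.1).mpr
      (hg'.mono_set (Ioc_subset_Ioc le_rfl hx.2))
  have hle : ∀ x ∈ Icc a b, ‖g x‖ ≤ ∫ t in a..x, ‖g' t‖ := fun x hx =>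
    (hg x hx).symm ▸ norm_integral_le_integral_norm hx.1
  have hbound' : ∀ᵐ t, t ∈ Icc a b → ‖g' t‖ ≤ M * ‖g t‖ := by
    rwa [← ae_restrict_iff' measurableSet_Icc, ← Measure.restrict_congr_set Ioo_ae_eq_Icc]
  induction n with
  | zero =>
    intro x hx
    have hab : a ≤ b := hx.1.trans hx.2
    simpa using (hle x hx).trans <| integral_mono_interval le_rfl hx.1 hx.2
      (Filter.Eventually.of_forall fun t => norm_nonneg _) (hint b ⟨hab, le_rfl⟩).norm
  | succ n ih =>
    intro x hx
    calc ‖g x‖ ≤ ∫ t in a..x, ‖g' t‖ := hle x hx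
      _ ≤ ∫ t in a..x, M * ((∫ t in a..b, ‖g' t‖) * (M * (t - a)) ^ n / n.factorial) := by
        refine integral_mono_ae_restrict hx.1 (hint x hx).norm
          (Continuous.intervalIntegrable (by fun_prop) _ _) ?_
        filter_upwards [ae_restrict_of_ae hbound', ae_restrict_mem measurableSet_Icc]
          with t ht htx
        have htab : t ∈ Icc a b := ⟨htx.1, htx.2.trans hx.2⟩
        exact (ht htab).trans (mul_le_mul_of_nonneg_left (ih t htab) hM)
      _ = _ := integral_mul_mul_pow_sub_div_factorial _ _ _ _ _

theorem eqOn_zero_of_eq_integral_of_norm_deriv_le (hM : 0 ≤ M)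
    (hg' : IntegrableOn g' (Ioc a b)) (hg : ∀ x ∈ Icc a b, g x = ∫ t in a..x, g' t)
    (hbound : ∀ᵐ t ∂volume.restrict (Ioo a b), ‖g' t‖ ≤ M * ‖g t‖) :
    EqOn g 0 (Icc a b) := by
  intro x hx
  have hlim := (FloorSemiring.tendsto_pow_div_factorial_atTop (M * (x - a))).const_mul
    (∫ t in a..b, ‖g' t‖)
  simp only [mul_zero, ← mul_div_assoc] at hlim
  exact norm_le_zero_iff.mp <| ge_of_tendsto hlim <| Filter.Eventually.of_forall fun n =>
    norm_le_mul_pow_div_factorial_of_eq_integral hM hg' hg hbound n x hx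

end Gronwall

def SolvesEigenproblem (V k : ℝ → ℂ) (ρ lam : ℂ) (f f' : ℝ → ℂ) : Prop :=
  IsACWithDeriv f f' ∧ f 0 = ρ * f (2 * π) ∧
    ∀ᵐ x ∂volume.restrict (Ioo 0 (2 * π)), I * f' x + V x * f x + f (2 * π) * k x = lam * f x

theorem IsEigenfun.solvesEigenproblem {V k : ℝ → ℂ} {ρ lam : ℂ} {f f' : ℝ → ℂ}
    (hf : IsEigenfun V k ρ lam f f') : SolvesEigenproblem V k ρ lam f f' :=
  ⟨hf.1, hf.2.2⟩

theorem IsACWithDeriv.sub_const_mul {f₁ f₁' f₂ f₂' : ℝ → ℂ} (h₂ : IsACWithDeriv f₂ f₂')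
    (h₁ : IsACWithDeriv f₁ f₁') (c : ℂ) :
    IsACWithDeriv (fun x => f₂ x - c * f₁ x) (fun x => f₂' x - c * f₁' x) := by
  refine ⟨h₂.1.sub (h₁.1.const_mul c), fun x hx => ?_⟩
  beta_reduce
  have hint : ∀ {f f' : ℝ → ℂ}, IsACWithDeriv f f' → IntervalIntegrable f' volume 0 x :=
    fun hf => (intervalIntegrable_iff_integrableOn_Ioc_of_le hx.1).mpr
      (hf.1.mono_set (Ioc_subset_Ioc le_rfl hx.2))
  rw [integral_sub (hint h₂) ((hint h₁).const_mul c), intervalIntegral.integral_const_mul, h₂.2 x hx,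
    h₁.2 x hx]
  ring

theorem SolvesEigenproblem.sub_const_mul {V k : ℝ → ℂ} {ρ lam : ℂ} {f₁ f₁' f₂ f₂' : ℝ → ℂ}
    (h₂ : SolvesEigenproblem V k ρ lam f₂ f₂') (h₁ : SolvesEigenproblem V k ρ lam f₁ f₁')
    (c : ℂ) :
    SolvesEigenproblem V k ρ lam (fun x => f₂ x - c * f₁ x) (fun x => f₂' x - c * f₁' x) := by
  refine ⟨h₂.1.sub_const_mul h₁.1 c, by simp only [h₁.2.1, h₂.2.1]; ring, ?_⟩
  filter_upwards [h₁.2.2, h₂.2.2] with x hx₁ hx₂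
  linear_combination hx₂ - c * hx₁

theorem SolvesEigenproblem.eqOn_zero {V k : ℝ → ℂ}
    (hV : MemLp V ⊤ (volume.restrict (Ioo 0 (2 * π)))) {ρ lam : ℂ} {f f' : ℝ → ℂ}
    (hf : SolvesEigenproblem V k ρ lam f f') (h2π : f (2 * π) = 0) :
    EqOn f 0 (Icc 0 (2 * π)) := by
  obtain ⟨⟨hf'int, hf'⟩, hbc, heq⟩ := hf
  have hM : 0 ≤ ‖lam‖ + lpNorm V ⊤ (volume.restrict (Ioo 0 (2 * π))) :=
    add_nonneg (norm_nonneg _) lpNorm_nonneg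
  refine eqOn_zero_of_eq_integral_of_norm_deriv_le hM hf'int
    (fun x hx => by rw [hf' x hx, hbc, h2π, mul_zero, zero_add]) ?_
  filter_upwards [heq, ae_le_lpNorm_exponent_top hV] with x hx hVx
  have hderiv : I * f' x = (lam - V x) * f x := by linear_combination hx - k x * h2π
  calc ‖f' x‖ = ‖(lam - V x) * f x‖ := by rw [← hderiv, norm_mul, norm_I, one_mul]
    _ ≤ (‖lam‖ + ‖V x‖) * ‖f x‖ := by
      rw [norm_mul]; gcongr; exact norm_sub_le _ _
    _ ≤ _ := by gcongr

theorem geometric_multiplicity_one_general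
    (V k : ℝ → ℂ)
    (hV : MeasureTheory.MemLp V ⊤ (MeasureTheory.volume.restrict (Set.Ioo 0 (2 * Real.pi))))
    (ρ : ℂ) (lam : ℂ) :
    (∀ f f' : ℝ → ℂ, IsEigenfun V k ρ lam f f' → f (2 * Real.pi) ≠ 0) ∧
    (∀ f₁ f₁' f₂ f₂' : ℝ → ℂ, IsEigenfun V k ρ lam f₁ f₁' → IsEigenfun V k ρ lam f₂ f₂' →
      ∃ c : ℂ, ∀ x ∈ Set.Icc (0:ℝ) (2 * Real.pi), f₂ x = c * f₁ x) := by
  have hend : ∀ f f' : ℝ → ℂ, IsEigenfun V k ρ lam f f' → f (2 * π) ≠ 0 := by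
    rintro f f' hf h2π
    obtain ⟨x, hx, hfx⟩ := hf.2.1
    exact hfx (hf.solvesEigenproblem.eqOn_zero hV h2π hx)
  refine ⟨hend, fun f₁ f₁' f₂ f₂' h₁ h₂ => ⟨f₂ (2 * π) / f₁ (2 * π), fun x hx => ?_⟩⟩
  have hdiff := h₂.solvesEigenproblem.sub_const_mul h₁.solvesEigenproblem
    (f₂ (2 * π) / f₁ (2 * π))
  exact sub_eq_zero.mp <| hdiff.eqOn_zero hV (sub_eq_zero.mpr (div_mul_cancel₀ _ (hend f₁ f₁' h₁)).symm) hx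

/-- Theorem 3.1 (geometric multiplicity one): every eigenfunction of `A_{ρ,k}` satisfies
`f(2π) ≠ 0`, and any two eigenfunctions for the same eigenvalue are proportional on `[0,2π]`. -/
theorem geometric_multiplicity_one
    (V k : ℝ → ℂ)
    (hV : MeasureTheory.MemLp V ⊤ (MeasureTheory.volume.restrict (Set.Ioo 0 (2 * Real.pi))))
    (hk : MeasureTheory.MemLp k 2 (MeasureTheory.volume.restrict (Set.Ioo 0 (2 * Real.pi))))
    (ρ : ℂ) (lam : ℂ) :
    (∀ f f' : ℝ → ℂ, IsEigenfun V k ρ lam f f' → f (2 * Real.pi) ≠ 0) ∧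
    (∀ f₁ f₁' f₂ f₂' : ℝ → ℂ, IsEigenfun V k ρ lam f₁ f₁' → IsEigenfun V k ρ lam f₂ f₂' →
      ∃ c : ℂ, ∀ x ∈ Set.Icc (0:ℝ) (2 * Real.pi), f₂ x = c * f₁ x) :=
  geometric_multiplicity_one_general V k hV ρ lam
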